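/- Let |φ⟩ = Σ a_{ijk}|ijk⟩ be a unit vector in ℂ^{d1}⊗ℂ^{d2}⊗ℂ^{d3} with d1, d2, d3 ≥ 2. Then C_3²(|φ⟩) ≥ (1/((d1−1)(d2−1)(d3−1))) · Σ_sub Σ_{1≤m<n≤3} C_{mn}²(|φ⟩_{2⊗2⊗2}), where the outer sum runs over all choices of index pairs i_1<i_2, j_1<j_2, k_1<k_2, |φ⟩_{2⊗2⊗2} = Σ_{i∈{i_1,i_2}, j∈{j_1,j_2}, k∈{k_1,k_2}} a_{ijk}|ijk⟩ is the corresponding unnormalized three-qubit substate, and C_{mn}(|φ⟩_{2⊗2⊗2}) is the two-qubit concurrence of the reduced matrix on qubits m,n of the unnormalized matrix |φ⟩_{2⊗2⊗2}⟨φ|_{2⊗2⊗2}. -/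

import Mathlib

/-!
For a unit vector, `C₃² = ½ ∑ (2 - tr ρ_A² - tr ρ_B²)` over the three cuts `A | B`, and for each
cut `2 - tr ρ_A² - tr ρ_B²` is the sum of the squared `2 × 2` minors of `a` read as an `A × B`
matrix (a Lagrange-type identity); hence `C₃² = ½ ∑ minorNormSq a`.

The reduced two-qubit matrix of a three-qubit substate is `|w₀⟩⟨w₀| + |w₁⟩⟨w₁|`. Write `Δᵢ`
for the determinant of `wᵢ` as a `2 × 2` matrix and `δ` for their polarization. The
decomposition `{w₀, w₁}` gives `C ≤ 2(|Δ₀| + |Δ₁|)`, and `{(w₀ ± c w₁)/√2}`, with the phase `c`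
chosen so that `c²Δ₁` points against `Δ₀`, gives `C² ≤ 4((|Δ₀| - |Δ₁|)² + |δ|²)`. Their average
bounds `C²` by a quantity whose sum over the three pairs of qubits is half the sum of the
squared minors of the substate.

Finally, an ordered pair `(x, y)` with `x ≠ y` lies in exactly one block `{x₁ < x₂}` and a
pair `(x, x)` in `d - 1` of them, so summing over all blocks counts each minor at most
`(d₁ - 1)(d₂ - 1)(d₃ - 1)` times.
-/

open scoped BigOperators

namespace Stmt9

/-- The (unnormalized) projector `|v⟩⟨v|` associated to a vector `v`. -/
noncomputable def outer {I : Type*} (v : I → ℂ) : Matrix I I ℂ :=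
  Matrix.of fun x y => v x * (starRingEnd ℂ) (v y)

variable {d1 d2 d3 : ℕ}

/-- `tr(ρ_α²)` for `α = {1}`. -/
noncomputable def tr1sq (ρ : Matrix (Fin d1 × Fin d2 × Fin d3) (Fin d1 × Fin d2 × Fin d3) ℂ) : ℂ :=
  ∑ i, ∑ p, (∑ j, ∑ k, ρ (i, j, k) (p, j, k)) * (∑ j, ∑ k, ρ (p, j, k) (i, j, k))

/-- `tr(ρ_α²)` for `α = {2}`. -/
noncomputable def tr2sq (ρ : Matrix (Fin d1 × Fin d2 × Fin d3) (Fin d1 × Fin d2 × Fin d3) ℂ) : ℂ :=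
  ∑ j, ∑ q, (∑ i, ∑ k, ρ (i, j, k) (i, q, k)) * (∑ i, ∑ k, ρ (i, q, k) (i, j, k))

/-- `tr(ρ_α²)` for `α = {3}`. -/
noncomputable def tr3sq (ρ : Matrix (Fin d1 × Fin d2 × Fin d3) (Fin d1 × Fin d2 × Fin d3) ℂ) : ℂ :=
  ∑ k, ∑ t, (∑ i, ∑ j, ρ (i, j, k) (i, j, t)) * (∑ i, ∑ j, ρ (i, j, t) (i, j, k))

/-- `tr(ρ_α²)` for `α = {1,2}`. -/
noncomputable def tr12sq (ρ : Matrix (Fin d1 × Fin d2 × Fin d3) (Fin d1 × Fin d2 × Fin d3) ℂ) : ℂ :=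
  ∑ i, ∑ p, ∑ j, ∑ q, (∑ k, ρ (i, j, k) (p, q, k)) * (∑ k, ρ (p, q, k) (i, j, k))

/-- `tr(ρ_α²)` for `α = {1,3}`. -/
noncomputable def tr13sq (ρ : Matrix (Fin d1 × Fin d2 × Fin d3) (Fin d1 × Fin d2 × Fin d3) ℂ) : ℂ :=
  ∑ i, ∑ p, ∑ k, ∑ t, (∑ j, ρ (i, j, k) (p, j, t)) * (∑ j, ρ (p, j, t) (i, j, k))

/-- `tr(ρ_α²)` for `α = {2,3}`. -/
noncomputable def tr23sq (ρ : Matrix (Fin d1 × Fin d2 × Fin d3) (Fin d1 × Fin d2 × Fin d3) ℂ) : ℂ :=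
  ∑ j, ∑ q, ∑ k, ∑ t, (∑ i, ρ (i, j, k) (i, q, t)) * (∑ i, ρ (i, q, t) (i, j, k))

/-- Tripartite pure-state concurrence
`C₃(|φ⟩) = 2^{1−3/2} √((2³−2) − Σ_α tr(ρ_α²))`, where `α` runs over the six
nonempty proper subsets of `{1,2,3}`. -/
noncomputable def pureC3 (φ : Fin d1 × Fin d2 × Fin d3 → ℂ) : ℝ :=
  (2 : ℝ) ^ ((1 : ℝ) - (3 : ℝ) / 2) *
    Real.sqrt (((2 : ℝ) ^ (3 : ℕ) - 2) -
      (tr1sq (outer φ) + tr2sq (outer φ) + tr3sq (outer φ) +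
        tr12sq (outer φ) + tr13sq (outer φ) + tr23sq (outer φ)).re)


/-- Reduced matrix of a three-qubit matrix on qubits 1 and 2. -/
noncomputable def red12 (σ : Matrix (Fin 2 × Fin 2 × Fin 2) (Fin 2 × Fin 2 × Fin 2) ℂ) :
    Matrix (Fin 2 × Fin 2) (Fin 2 × Fin 2) ℂ :=
  Matrix.of fun x y => ∑ k, σ (x.1, x.2, k) (y.1, y.2, k)

/-- Reduced matrix of a three-qubit matrix on qubits 1 and 3. -/
noncomputable def red13 (σ : Matrix (Fin 2 × Fin 2 × Fin 2) (Fin 2 × Fin 2 × Fin 2) ℂ) :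
    Matrix (Fin 2 × Fin 2) (Fin 2 × Fin 2) ℂ :=
  Matrix.of fun x y => ∑ j, σ (x.1, j, x.2) (y.1, j, y.2)

/-- Reduced matrix of a three-qubit matrix on qubits 2 and 3. -/
noncomputable def red23 (σ : Matrix (Fin 2 × Fin 2 × Fin 2) (Fin 2 × Fin 2 × Fin 2) ℂ) :
    Matrix (Fin 2 × Fin 2) (Fin 2 × Fin 2) ℂ :=
  Matrix.of fun x y => ∑ i, σ (i, x.1, x.2) (i, y.1, y.2)

/-- Concurrence of a (possibly unnormalized) two-qubit vector with
coefficients `b`, `C = 2|b₁₁b₂₂ − b₁₂b₂₁|`. -/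
noncomputable def C2pure (b : Fin 2 × Fin 2 → ℂ) : ℝ :=
  2 * ‖b (0, 0) * b (1, 1) - b (0, 1) * b (1, 0)‖

/-- Concurrence of a (not necessarily normalized) two-qubit positive
semidefinite matrix: `C(σ) = min Σᵢ C(|φ̃ᵢ⟩)` over all decompositions
`σ = Σᵢ |φ̃ᵢ⟩⟨φ̃ᵢ|` into unnormalized vectors. -/
noncomputable def C2unnorm (σ : Matrix (Fin 2 × Fin 2) (Fin 2 × Fin 2) ℂ) : ℝ :=
  sInf {c : ℝ | ∃ (n : ℕ) (v : Fin n → (Fin 2 × Fin 2 → ℂ)),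
    σ = ∑ i, outer (v i) ∧ c = ∑ i, C2pure (v i)}

/-- The (unnormalized) three-qubit substate of `a` determined by the index
pairs `i₁,i₂`, `j₁,j₂`, `k₁,k₂`. -/
noncomputable def subvec (a : Fin d1 × Fin d2 × Fin d3 → ℂ)
    (i₁ i₂ : Fin d1) (j₁ j₂ : Fin d2) (k₁ k₂ : Fin d3) : Fin 2 × Fin 2 × Fin 2 → ℂ :=
  fun x => a (if x.1 = 0 then i₁ else i₂,
              if x.2.1 = 0 then j₁ else j₂,
              if x.2.2 = 0 then k₁ else k₂)

open Finset ComplexConjugate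

section Bipartite

variable {ι κ : Type*} [Fintype ι] [Fintype κ]

noncomputable def purityLeft (f : ι → κ → ℂ) : ℂ :=
  ∑ x, ∑ x', (∑ y, f x y * conj (f x' y)) * (∑ y, f x' y * conj (f x y))

noncomputable def purityRight (f : ι → κ → ℂ) : ℂ :=
  ∑ y, ∑ y', (∑ x, f x y * conj (f x y')) * (∑ x, f x y' * conj (f x y))

noncomputable def minorNormSqSum (f : ι → κ → ℂ) : ℝ :=
  ∑ x, ∑ x', ∑ y, ∑ y', Complex.normSq (f x y * f x' y' - f x y' * f x' y)

theorem ofReal_minorNormSqSum (f : ι → κ → ℂ) :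
    (minorNormSqSum f : ℂ) =
      2 * ((∑ x, ∑ y, Complex.normSq (f x y) : ℝ) : ℂ) ^ 2 - purityLeft f - purityRight f := by
  have hsq : (∑ x, ∑ y, f x y * conj (f x y)) ^ 2 =
      ∑ x, ∑ x', ∑ y, ∑ y', f x y * f x' y' * conj (f x y * f x' y') := by
    simp only [sq, sum_mul_sum, map_mul]
    exact sum_congr rfl fun _ _ => sum_congr rfl fun _ _ => sum_congr rfl fun _ _ =>
      sum_congr rfl fun _ _ => by ring
  have hsq' : (∑ x, ∑ y, f x y * conj (f x y)) ^ 2 =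
      ∑ x, ∑ x', ∑ y, ∑ y', f x y' * f x' y * conj (f x y' * f x' y) := by
    rw [hsq]
    exact sum_congr rfl fun _ _ => sum_congr rfl fun _ _ => sum_comm
  have hL : purityLeft f = ∑ x, ∑ x', ∑ y, ∑ y', f x y' * f x' y * conj (f x y * f x' y') := by
    rw [purityLeft, sum_comm]
    simp only [sum_mul_sum, map_mul]
    exact sum_congr rfl fun _ _ => sum_congr rfl fun _ _ => sum_congr rfl fun _ _ =>
      sum_congr rfl fun _ _ => by ring
  have hR : purityRight f = ∑ x, ∑ x', ∑ y, ∑ y', f x y * f x' y' * conj (f x y' * f x' y) := by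
    simp only [purityRight, sum_mul_sum, map_mul]
    rw [sum_comm_cycle]
    refine sum_congr rfl fun _ _ => ?_
    rw [sum_comm_cycle]
    exact sum_congr rfl fun _ _ => sum_congr rfl fun _ _ => sum_congr rfl fun _ _ => by ring
  simp only [minorNormSqSum, Complex.ofReal_sum, ← Complex.mul_conj]
  simp only [map_sub, sub_mul, mul_sub, sum_sub_distrib]
  rw [← hsq, ← hsq', ← hL, ← hR]
  ring

end Bipartite

section Tripartite

variable {α β γ : Type*}

/-- The sum of the squared `2 × 2` minors of `a` read as a matrix along the cuts `1 | 23`,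
`13 | 2` and `12 | 3`. -/
noncomputable def minorNormSq (a : α × β × γ → ℂ) (i p : α) (j q : β) (k t : γ) : ℝ :=
  Complex.normSq (a (i, j, k) * a (p, q, t) - a (i, q, t) * a (p, j, k)) +
  Complex.normSq (a (i, j, k) * a (p, q, t) - a (i, q, k) * a (p, j, t)) +
  Complex.normSq (a (i, j, k) * a (p, q, t) - a (i, j, t) * a (p, q, k))

theorem minorNormSq_nonneg (a : α × β × γ → ℂ) (i p : α) (j q : β) (k t : γ) :
    0 ≤ minorNormSq a i p j q k t :=
  add_nonneg (add_nonneg (Complex.normSq_nonneg _) (Complex.normSq_nonneg _))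
    (Complex.normSq_nonneg _)

variable [Fintype α] [Fintype β] [Fintype γ]

theorem sum_minorNormSq (a : α × β × γ → ℂ) :
    ∑ i, ∑ p, ∑ j, ∑ q, ∑ k, ∑ t, minorNormSq a i p j q k t =
      minorNormSqSum (fun i (jk : β × γ) => a (i, jk)) +
      minorNormSqSum (fun (ik : α × γ) j => a (ik.1, j, ik.2)) +
      minorNormSqSum (fun (ij : α × β) k => a (ij.1, ij.2, k)) := by
  simp only [minorNormSq, minorNormSqSum, Fintype.sum_prod_type, sum_add_distrib]
  refine congrArg₂ (· + ·) (congrArg₂ (· + ·) ?_ ?_) ?_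
  · exact sum_congr rfl fun i _ => sum_congr rfl fun p _ => sum_congr rfl fun j _ => sum_comm
  · exact sum_congr rfl fun i _ => (sum_comm.trans <| sum_congr rfl fun p _ =>
      sum_comm_cycle.trans <| sum_congr rfl fun j _ => sum_comm_cycle).symm
  · exact sum_congr rfl fun i _ => sum_comm

end Tripartite

section Purity

variable (a : Fin d1 × Fin d2 × Fin d3 → ℂ)

theorem tr1sq_outer :
    tr1sq (outer a) = purityLeft fun i (jk : Fin d2 × Fin d3) => a (i, jk) := by
  simp only [tr1sq, outer, purityLeft, Matrix.of_apply, Fintype.sum_prod_type]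

theorem tr23sq_outer :
    tr23sq (outer a) = purityRight fun i (jk : Fin d2 × Fin d3) => a (i, jk) := by
  simp only [tr23sq, outer, purityRight, Matrix.of_apply, Fintype.sum_prod_type]
  exact sum_congr rfl fun j _ => sum_comm

theorem tr13sq_outer :
    tr13sq (outer a) = purityLeft fun (ik : Fin d1 × Fin d3) j => a (ik.1, j, ik.2) := by
  simp only [tr13sq, outer, purityLeft, Matrix.of_apply, Fintype.sum_prod_type]
  exact sum_congr rfl fun i _ => sum_comm

theorem tr2sq_outer :
    tr2sq (outer a) = purityRight fun (ik : Fin d1 × Fin d3) j => a (ik.1, j, ik.2) := by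
  simp only [tr2sq, outer, purityRight, Matrix.of_apply, Fintype.sum_prod_type]

theorem tr12sq_outer :
    tr12sq (outer a) = purityLeft fun (ij : Fin d1 × Fin d2) k => a (ij.1, ij.2, k) := by
  simp only [tr12sq, outer, purityLeft, Matrix.of_apply, Fintype.sum_prod_type]
  exact sum_congr rfl fun i _ => sum_comm

theorem tr3sq_outer :
    tr3sq (outer a) = purityRight fun (ij : Fin d1 × Fin d2) k => a (ij.1, ij.2, k) := by
  simp only [tr3sq, outer, purityRight, Matrix.of_apply, Fintype.sum_prod_type]

end Purity

theorem pureC3_sq {a : Fin d1 × Fin d2 × Fin d3 → ℂ} (ha : ∑ x, Complex.normSq (a x) = 1) :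
    pureC3 a ^ 2 = 1 / 2 * ∑ i, ∑ p, ∑ j, ∑ q, ∑ k, ∑ t, minorNormSq a i p j q k t := by
  have hN₁ : ∑ i, ∑ jk : Fin d2 × Fin d3, Complex.normSq (a (i, jk)) = 1 := by
    rwa [← Fintype.sum_prod_type']
  have hN₂ : ∑ ik : Fin d1 × Fin d3, ∑ j, Complex.normSq (a (ik.1, j, ik.2)) = 1 := by
    simpa only [Fintype.sum_prod_type, sum_comm (γ := Fin d3)] using ha
  have hN₃ : ∑ ij : Fin d1 × Fin d2, ∑ k, Complex.normSq (a (ij.1, ij.2, k)) = 1 := by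
    simpa only [Fintype.sum_prod_type] using ha
  have htr : tr1sq (outer a) + tr2sq (outer a) + tr3sq (outer a) + tr12sq (outer a) +
      tr13sq (outer a) + tr23sq (outer a) =
        ((6 - ∑ i, ∑ p, ∑ j, ∑ q, ∑ k, ∑ t, minorNormSq a i p j q k t : ℝ) : ℂ) := by
    have h₁ := ofReal_minorNormSqSum fun i (jk : Fin d2 × Fin d3) => a (i, jk)
    have h₂ := ofReal_minorNormSqSum fun (ik : Fin d1 × Fin d3) j => a (ik.1, j, ik.2)
    have h₃ := ofReal_minorNormSqSum fun (ij : Fin d1 × Fin d2) k => a (ij.1, ij.2, k)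
    rw [hN₁, Complex.ofReal_one] at h₁
    rw [hN₂, Complex.ofReal_one] at h₂
    rw [hN₃, Complex.ofReal_one] at h₃
    rw [tr1sq_outer, tr2sq_outer, tr3sq_outer, tr12sq_outer, tr13sq_outer, tr23sq_outer,
      sum_minorNormSq]
    push_cast
    linear_combination h₁ + h₂ + h₃
  have hY : 0 ≤ ∑ i, ∑ p, ∑ j, ∑ q, ∑ k, ∑ t, minorNormSq a i p j q k t :=
    Fintype.sum_nonneg fun i => Fintype.sum_nonneg fun p => Fintype.sum_nonneg fun j =>
    Fintype.sum_nonneg fun q => Fintype.sum_nonneg fun k => Fintype.sum_nonneg fun t =>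
      minorNormSq_nonneg a i p j q k t
  have hcoef : ((2 : ℝ) ^ ((1 : ℝ) - (3 : ℝ) / 2)) ^ 2 = 1 / 2 := by
    rw [← Real.rpow_natCast, ← Real.rpow_mul zero_le_two]
    norm_num
  rw [pureC3, htr, Complex.ofReal_re, mul_pow, hcoef, Real.sq_sqrt] <;> norm_num [hY]

section TwoQubit

noncomputable def qubitDet (v : Fin 2 × Fin 2 → ℂ) : ℂ := v (0, 0) * v (1, 1) - v (0, 1) * v (1, 0)

noncomputable def qubitDetPolar (v w : Fin 2 × Fin 2 → ℂ) : ℂ :=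
  v (0, 0) * w (1, 1) + w (0, 0) * v (1, 1) - v (0, 1) * w (1, 0) - w (0, 1) * v (1, 0)

theorem qubitDet_mul_add_mul (s c : ℂ) (v w : Fin 2 × Fin 2 → ℂ) :
    qubitDet (fun x => s * (v x + c * w x)) =
      s ^ 2 * (qubitDet v + c ^ 2 * qubitDet w + c * qubitDetPolar v w) := by
  simp only [qubitDet, qubitDetPolar]
  ring

theorem C2unnorm_nonneg (σ : Matrix (Fin 2 × Fin 2) (Fin 2 × Fin 2) ℂ) : 0 ≤ C2unnorm σ := by
  refine Real.sInf_nonneg fun c ⟨n, v, _, hc⟩ => hc ▸ sum_nonneg fun i _ => ?_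
  exact mul_nonneg zero_le_two (norm_nonneg _)

theorem C2unnorm_le_of_eq_outer_add {σ : Matrix (Fin 2 × Fin 2) (Fin 2 × Fin 2) ℂ}
    {v w : Fin 2 × Fin 2 → ℂ} (h : σ = outer v + outer w) :
    C2unnorm σ ≤ 2 * ‖qubitDet v‖ + 2 * ‖qubitDet w‖ := by
  refine csInf_le ⟨0, fun c ⟨n, u, _, hc⟩ => hc ▸ sum_nonneg fun i _ => ?_⟩
    ⟨2, ![v, w], by simp [Fin.sum_univ_two, h], by simp [Fin.sum_univ_two, C2pure, qubitDet]⟩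
  exact mul_nonneg zero_le_two (norm_nonneg _)

theorem outer_rotate_add_outer_rotate {c s : ℂ} (hc : ‖c‖ = 1) (hs : 2 * (s * conj s) = 1)
    (v w : Fin 2 × Fin 2 → ℂ) :
    outer (fun x => s * (v x + c * w x)) + outer (fun x => s * (v x + -c * w x)) =
      outer v + outer w := by
  have hc' : c * conj c = 1 := by
    rw [Complex.mul_conj, Complex.normSq_eq_norm_sq, hc]; norm_num
  ext x y
  simp only [outer, Matrix.add_apply, Matrix.of_apply, map_mul, map_add, map_neg]
  linear_combination (v x * conj (v y) + w x * conj (w y)) * hs +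
    2 * s * conj s * w x * conj (w y) * hc'

open Complex in
theorem exists_norm_eq_one_norm_add_sq_mul (α γ : ℂ) :
    ∃ c : ℂ, ‖c‖ = 1 ∧ ‖α + c ^ 2 * γ‖ = |‖α‖ - ‖γ‖| := by
  set c := I * exp (((arg α - arg γ) / 2 : ℝ) * I)
  refine ⟨c, by rw [norm_mul, norm_I, norm_exp_ofReal_mul_I, one_mul], ?_⟩
  have hc : c ^ 2 * exp (arg γ * I) = -exp (arg α * I) := by
    rw [mul_pow, I_sq, ← exp_nat_mul, neg_one_mul, neg_mul, ← exp_add]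
    push_cast
    ring_nf
  have key : α + c ^ 2 * γ = ((‖α‖ - ‖γ‖ : ℝ) : ℂ) * exp (arg α * I) := calc
    α + c ^ 2 * γ = ‖α‖ * exp (arg α * I) + ‖γ‖ * (c ^ 2 * exp (arg γ * I)) := by
      rw [norm_mul_exp_arg_mul_I, mul_left_comm, norm_mul_exp_arg_mul_I]
    _ = _ := by rw [hc]; push_cast; ring
  rw [key, norm_mul, norm_exp_ofReal_mul_I, mul_one, Complex.norm_real, Real.norm_eq_abs]

theorem C2unnorm_outer_add_sq_le (v w : Fin 2 × Fin 2 → ℂ) :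
    C2unnorm (outer v + outer w) ^ 2 ≤
      4 * ‖qubitDet v‖ ^ 2 + 4 * ‖qubitDet w‖ ^ 2 + 2 * ‖qubitDetPolar v w‖ ^ 2 := by
  set C := C2unnorm (outer v + outer w)
  have hC : 0 ≤ C := C2unnorm_nonneg _
  have h₁ : C ≤ 2 * ‖qubitDet v‖ + 2 * ‖qubitDet w‖ := C2unnorm_le_of_eq_outer_add rfl
  obtain ⟨c, hc, hZ⟩ := exists_norm_eq_one_norm_add_sq_mul (qubitDet v) (qubitDet w)
  set s : ℂ := (((Real.sqrt 2)⁻¹ : ℝ) : ℂ)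
  have hs₂ : s ^ 2 = 1 / 2 := by
    simp only [s, ← Complex.ofReal_pow, inv_pow, Real.sq_sqrt zero_le_two]
    norm_num
  have hs : 2 * (s * conj s) = 1 := by
    rw [Complex.conj_ofReal, ← sq, hs₂]
    norm_num
  set Z := qubitDet v + c ^ 2 * qubitDet w
  set D := c * qubitDetPolar v w
  have h₂ : C ≤ ‖Z + D‖ + ‖Z - D‖ := by
    refine (C2unnorm_le_of_eq_outer_add (outer_rotate_add_outer_rotate hc hs v w).symm).trans_eq ?_
    rw [qubitDet_mul_add_mul, qubitDet_mul_add_mul, hs₂, neg_sq, neg_mul, ← sub_eq_add_neg,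
      norm_mul, norm_mul]
    norm_num [Z, D]
    ring
  have hpar := parallelogram_law_with_norm ℝ Z D
  have hD : ‖D‖ = ‖qubitDetPolar v w‖ := by simp [D, hc]
  rw [hZ, hD, sq_abs] at hpar
  nlinarith [sq_nonneg (‖Z + D‖ - ‖Z - D‖), norm_nonneg (Z + D), norm_nonneg (Z - D)]

end TwoQubit

section ThreeQubit

variable (b : Fin 2 × Fin 2 × Fin 2 → ℂ)

theorem red12_outer :
    red12 (outer b) = outer (fun x => b (x.1, x.2, 0)) + outer (fun x => b (x.1, x.2, 1)) := by
  ext x y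
  simp [red12, outer, Fin.sum_univ_two]

theorem red13_outer :
    red13 (outer b) = outer (fun x => b (x.1, 0, x.2)) + outer (fun x => b (x.1, 1, x.2)) := by
  ext x y
  simp [red13, outer, Fin.sum_univ_two]

theorem red23_outer :
    red23 (outer b) = outer (fun x => b (0, x.1, x.2)) + outer (fun x => b (1, x.1, x.2)) := by
  ext x y
  simp [red23, outer, Fin.sum_univ_two]

theorem sum_C2unnorm_red_sq_le :
    C2unnorm (red12 (outer b)) ^ 2 + C2unnorm (red13 (outer b)) ^ 2 +
        C2unnorm (red23 (outer b)) ^ 2 ≤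
      1 / 2 * ∑ i, ∑ p, ∑ j, ∑ q, ∑ k, ∑ t, minorNormSq b i p j q k t := by
  rw [red12_outer, red13_outer, red23_outer]
  refine (add_le_add (add_le_add (C2unnorm_outer_add_sq_le _ _) (C2unnorm_outer_add_sq_le _ _))
    (C2unnorm_outer_add_sq_le _ _)).trans_eq ?_
  simp only [qubitDet, qubitDetPolar, Complex.sq_norm]
  apply Complex.ofReal_injective
  push_cast [minorNormSq]
  simp only [← Complex.mul_conj, Fin.sum_univ_two, map_sub, map_add, map_mul]
  ring

end ThreeQubit

section Blocks

variable {δ : Type*}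

def pick (x y : δ) (e : Fin 2) : δ := if e = 0 then x else y

theorem sum_pick_pick {M : Type*} [AddCommMonoid M] (g : δ → δ → M) (x y : δ) :
    ∑ e, ∑ e', g (pick x y e) (pick x y e') = g x x + g x y + (g y x + g y y) := by
  simp [pick, Fin.sum_univ_two]

variable [Fintype δ] [LinearOrder δ]

noncomputable def pairBlockSum (g : δ → δ → ℝ) : ℝ :=
  ∑ x₁, ∑ x₂, if x₁ < x₂ then ∑ e, ∑ e', g (pick x₁ x₂ e) (pick x₁ x₂ e') else 0

theorem sum_ite_lt_add_swap {M : Type*} [AddCommMonoid M] (F : δ → δ → M) :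
    ∑ x, ∑ y, (if x < y then F x y + F y x else 0) = ∑ x, ∑ y, if x ≠ y then F x y else 0 := by
  have hswap : ∑ x, ∑ y, (if x < y then F y x else 0) = ∑ x, ∑ y, if y < x then F x y else 0 :=
    sum_comm
  have hsplit : ∑ x, ∑ y, (if x < y then F x y + F y x else 0) =
      ∑ x, ∑ y, ((if x < y then F x y else 0) + if y < x then F x y else 0) := by
    simp only [ite_add_zero, sum_add_distrib, hswap]
  rw [hsplit]
  refine sum_congr rfl fun x _ => sum_congr rfl fun y _ => ?_
  rcases lt_trichotomy x y with h | rfl | h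
  · simp [h, h.ne, h.not_gt]
  · simp
  · simp [h, h.ne', h.not_gt]

theorem pairBlockSum_eq (g : δ → δ → ℝ) :
    pairBlockSum g = ∑ x, ∑ y, if x ≠ y then g x x + g x y else 0 := by
  rw [← sum_ite_lt_add_swap]
  refine sum_congr rfl fun x _ => sum_congr rfl fun y _ => ?_
  split_ifs
  · rw [sum_pick_pick]; ring
  · rfl

theorem pairBlockSum_nonneg {g : δ → δ → ℝ} (hg : ∀ x y, 0 ≤ g x y) : 0 ≤ pairBlockSum g := by
  rw [pairBlockSum_eq]
  refine sum_nonneg fun x _ => sum_nonneg fun y _ => ?_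
  split_ifs
  · exact add_nonneg (hg x x) (hg x y)
  · exact le_rfl

theorem pairBlockSum_le (hδ : 2 ≤ Fintype.card δ) {g g' : δ → δ → ℝ} (hg : ∀ x y, 0 ≤ g x y)
    (hgg' : ∀ x y, g x y ≤ g' x y) :
    pairBlockSum g ≤ (Fintype.card δ - 1) * ∑ x, ∑ y, g' x y := by
  have hcard : (1 : ℝ) ≤ Fintype.card δ - 1 := by
    have : (2 : ℝ) ≤ Fintype.card δ := by exact_mod_cast hδ
    linarith
  have hrow : ∀ x, ∑ y, (if x ≠ y then g x x + g x y else 0) ≤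
      (Fintype.card δ - 1) * ∑ y, g x y := by
    intro x
    rw [← sum_filter, filter_ne, sum_add_distrib, sum_const, card_erase_of_mem (mem_univ x),
      card_univ, nsmul_eq_mul, Nat.cast_sub (by omega), Nat.cast_one,
      ← add_sum_erase univ (g x) (mem_univ x)]
    have : 0 ≤ ∑ y ∈ univ.erase x, g x y := sum_nonneg fun y _ => hg x y
    nlinarith
  calc pairBlockSum g ≤ ∑ x, (Fintype.card δ - 1) * ∑ y, g x y := by
        rw [pairBlockSum_eq]; exact sum_le_sum fun x _ => hrow x
    _ ≤ ∑ x, (Fintype.card δ - 1) * ∑ y, g' x y := by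
        gcongr with x _ y _
        exact hgg' x y
    _ = (Fintype.card δ - 1) * ∑ x, ∑ y, g' x y := by rw [mul_sum]

theorem sum_lt_ite_sum_comm {ι M : Type*} [Fintype ι] [AddCommMonoid M] (f : δ → δ → ι → M) :
    (∑ x₁, ∑ x₂, if x₁ < x₂ then ∑ m, f x₁ x₂ m else (0 : M)) =
      ∑ m, ∑ x₁, ∑ x₂, if x₁ < x₂ then f x₁ x₂ m else (0 : M) := by
  simp only [ite_sum_zero]
  exact (sum_congr rfl fun _ _ => sum_comm).trans sum_comm

end Blocks

section BlockTriples

variable {α β γ : Type*} [Fintype α] [Fintype β] [Fintype γ]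

theorem sum_four_ite_sum_comm {ι M : Type*} [Fintype ι] [AddCommMonoid M]
    (P : β → β → γ → γ → Prop) [∀ j₁ j₂ k₁ k₂, Decidable (P j₁ j₂ k₁ k₂)]
    (f : β → β → γ → γ → ι → M) :
    (∑ j₁, ∑ j₂, ∑ k₁, ∑ k₂, if P j₁ j₂ k₁ k₂ then ∑ m, f j₁ j₂ k₁ k₂ m else (0 : M)) =
      ∑ m, ∑ j₁, ∑ j₂, ∑ k₁, ∑ k₂, if P j₁ j₂ k₁ k₂ then f j₁ j₂ k₁ k₂ m else (0 : M) := by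
  simp only [ite_sum_zero]
  exact (sum_congr rfl fun _ _ => (sum_congr rfl fun _ _ =>
    (sum_congr rfl fun _ _ => sum_comm).trans sum_comm).trans sum_comm).trans sum_comm

variable [LinearOrder α] [LinearOrder β] [LinearOrder γ]

theorem sum_blockPairs_eq (G : β → β → γ → γ → ℝ) :
    (∑ j₁, ∑ j₂, ∑ k₁, ∑ k₂, if j₁ < j₂ ∧ k₁ < k₂ then
        ∑ e₃, ∑ e₄, ∑ e₅, ∑ e₆,
          G (pick j₁ j₂ e₃) (pick j₁ j₂ e₄) (pick k₁ k₂ e₅) (pick k₁ k₂ e₆) else 0) =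
      pairBlockSum fun j q => pairBlockSum fun k t => G j q k t := by
  unfold pairBlockSum
  refine sum_congr rfl fun j₁ _ => sum_congr rfl fun j₂ _ => ?_
  by_cases hj : j₁ < j₂
  · simp only [hj, true_and, if_true, sum_lt_ite_sum_comm]
  · simp [hj]

theorem sum_blockTriples_eq (H : α → α → β → β → γ → γ → ℝ) :
    (∑ i₁, ∑ i₂, ∑ j₁, ∑ j₂, ∑ k₁, ∑ k₂, if i₁ < i₂ ∧ j₁ < j₂ ∧ k₁ < k₂ then
        ∑ e₁, ∑ e₂, ∑ e₃, ∑ e₄, ∑ e₅, ∑ e₆,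
          H (pick i₁ i₂ e₁) (pick i₁ i₂ e₂) (pick j₁ j₂ e₃) (pick j₁ j₂ e₄)
            (pick k₁ k₂ e₅) (pick k₁ k₂ e₆) else 0) =
      pairBlockSum fun i p => pairBlockSum fun j q => pairBlockSum fun k t => H i p j q k t := by
  rw [pairBlockSum]
  refine sum_congr rfl fun i₁ _ => sum_congr rfl fun i₂ _ => ?_
  by_cases hi : i₁ < i₂
  · simp only [hi, true_and, if_true, ← sum_blockPairs_eq]
    rw [sum_four_ite_sum_comm]
    exact sum_congr rfl fun _ _ => sum_four_ite_sum_comm _ _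
  · simp [hi]

theorem sum_blockTriples_le (hα : 2 ≤ Fintype.card α) (hβ : 2 ≤ Fintype.card β)
    (hγ : 2 ≤ Fintype.card γ) {H : α → α → β → β → γ → γ → ℝ}
    (hH : ∀ i p j q k t, 0 ≤ H i p j q k t) :
    (∑ i₁, ∑ i₂, ∑ j₁, ∑ j₂, ∑ k₁, ∑ k₂, if i₁ < i₂ ∧ j₁ < j₂ ∧ k₁ < k₂ then
        ∑ e₁, ∑ e₂, ∑ e₃, ∑ e₄, ∑ e₅, ∑ e₆,
          H (pick i₁ i₂ e₁) (pick i₁ i₂ e₂) (pick j₁ j₂ e₃) (pick j₁ j₂ e₄)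
            (pick k₁ k₂ e₅) (pick k₁ k₂ e₆) else 0) ≤
      (Fintype.card α - 1) * (Fintype.card β - 1) * (Fintype.card γ - 1) *
        ∑ i, ∑ p, ∑ j, ∑ q, ∑ k, ∑ t, H i p j q k t := by
  have hK : ∀ i p j q, 0 ≤ pairBlockSum fun k t => H i p j q k t :=
    fun i p j q => pairBlockSum_nonneg (hH i p j q)
  rw [sum_blockTriples_eq]
  refine (pairBlockSum_le hα (fun i p => pairBlockSum_nonneg (hK i p)) fun i p =>
    pairBlockSum_le hβ (hK i p) fun j q =>
      pairBlockSum_le hγ (hH i p j q) fun _ _ => le_rfl).trans_eq ?_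
  simp only [mul_sum, mul_assoc]

end BlockTriples

/-- for a unit vector `|φ⟩ = Σ a_{ijk}|ijk⟩` in
`ℂ^{d1}⊗ℂ^{d2}⊗ℂ^{d3}` with `d1, d2, d3 ≥ 2`,
`C₃²(|φ⟩) ≥ (1/((d1−1)(d2−1)(d3−1))) Σ_sub Σ_{1≤m<n≤3} C_{mn}²(|φ⟩_{2⊗2⊗2})`,
the outer sum over all choices of index pairs `i₁<i₂`, `j₁<j₂`, `k₁<k₂`,
and `C_{mn}` the two-qubit concurrence of the reduced matrix on qubits `m,n`
of the unnormalized matrix `|φ⟩_{2⊗2⊗2}⟨φ|_{2⊗2⊗2}`. -/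
theorem stmt_9 (hd1 : 2 ≤ d1) (hd2 : 2 ≤ d2) (hd3 : 2 ≤ d3)
    (a : Fin d1 × Fin d2 × Fin d3 → ℂ)
    (ha : ∑ x, Complex.normSq (a x) = 1) :
    (pureC3 a) ^ 2 ≥
      (1 / (((d1 : ℝ) - 1) * ((d2 : ℝ) - 1) * ((d3 : ℝ) - 1))) *
        ∑ i₁, ∑ i₂, ∑ j₁, ∑ j₂, ∑ k₁, ∑ k₂,
          if i₁ < i₂ ∧ j₁ < j₂ ∧ k₁ < k₂ then
            (C2unnorm (red12 (outer (subvec a i₁ i₂ j₁ j₂ k₁ k₂)))) ^ 2 +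
            (C2unnorm (red13 (outer (subvec a i₁ i₂ j₁ j₂ k₁ k₂)))) ^ 2 +
            (C2unnorm (red23 (outer (subvec a i₁ i₂ j₁ j₂ k₁ k₂)))) ^ 2
          else 0 := by
  have hblocks := sum_blockTriples_le (by simpa using hd1) (by simpa using hd2)
    (by simpa using hd3) (minorNormSq_nonneg a)
  simp only [Fintype.card_fin] at hblocks
  have hP : 0 < ((d1 : ℝ) - 1) * ((d2 : ℝ) - 1) * ((d3 : ℝ) - 1) := by
    have h₁ : (1 : ℝ) < d1 := by exact_mod_cast hd1
    have h₂ : (1 : ℝ) < d2 := by exact_mod_cast hd2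
    have h₃ : (1 : ℝ) < d3 := by exact_mod_cast hd3
    exact mul_pos (mul_pos (sub_pos.2 h₁) (sub_pos.2 h₂)) (sub_pos.2 h₃)
  rw [ge_iff_le, pureC3_sq ha, one_div_mul_eq_div, div_le_iff₀ hP]
  calc _ ≤ ∑ i₁, ∑ i₂, ∑ j₁, ∑ j₂, ∑ k₁, ∑ k₂, 1 / 2 * if i₁ < i₂ ∧ j₁ < j₂ ∧ k₁ < k₂ then
          ∑ e₁, ∑ e₂, ∑ e₃, ∑ e₄, ∑ e₅, ∑ e₆,
            minorNormSq a (pick i₁ i₂ e₁) (pick i₁ i₂ e₂) (pick j₁ j₂ e₃) (pick j₁ j₂ e₄)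
              (pick k₁ k₂ e₅) (pick k₁ k₂ e₆) else 0 := by
        gcongr with i₁ _ i₂ _ j₁ _ j₂ _ k₁ _ k₂ _
        split_ifs
        -- `subvec a … (e₁, e₃, e₅)` unfolds to `a (pick i₁ i₂ e₁, pick j₁ j₂ e₃, pick k₁ k₂ e₅)`
        · exact sum_C2unnorm_red_sq_le _
        · simp
    _ ≤ 1 / 2 * ((d1 - 1) * (d2 - 1) * (d3 - 1) *
          ∑ i, ∑ p, ∑ j, ∑ q, ∑ k, ∑ t, minorNormSq a i p j q k t) := by
        simp only [← mul_sum]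
        gcongr
    _ = _ := by ring

end Stmt9
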